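/- Let 0 < α < 2, w ∈ ℝ, λ = λ₁ + iλ₂ with λ₂ > 0, C > 0, T* ≥ 1, and K₀ > 0 with λ₂ K₀^α < 1/4. Let v : [1,∞) → ℂ satisfy the model ODE with remainder r, where |r(t)| ≤ C t^{−5/4+α/2} for all t ≥ 1, and assume |v(t)| ≤ K₀ t^{1/2−1/α} for all t ≥ T*. Define Φ(t) = ∫₁ᵗ s^{−α/2} |v(s)|^α ds and z(t) = v(t) e^{−i(w t + λ Φ(t))}. Then there exist z₊ ∈ ℂ and C′ > 0 such that |z(t) − z₊| ≤ C′ t^{−1/4 + λ₂ K₀^α} for all t ≥ 1. -/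

import Mathlib

/-!
Differentiating `z`, the nonlinear term of the equation cancels against the phase `λ Φ`, leaving
`z′ = i t^{−α/2} r(t) e^{−i(w t + λ Φ(t))}`, and `|e^{−i(w t + λ Φ(t))}| = e^{λ₂ Φ(t)}`.
The decay of `v` makes the integrand of `Φ` at most `K₀^α / s` for `s ≥ T*`, so
`Φ(t) ≤ A + K₀^α log t` and `|z′(t)| ≤ B t^{−5/4 + λ₂ K₀^α}`. Since `λ₂ K₀^α < 1/4` this is
integrable at infinity: `z` has a limit `z₊`, and `|z(t) − z₊| ≤ ∫_t^∞ |z′|` gives the rate.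
-/

open Real Set

noncomputable section

/-- `v` satisfies the model ODE
`v′(t) = i (w v(t) + λ t^{−α/2} |v(t)|^α v(t) + t^{−α/2} r(t))`
with continuous remainder `r` on the set `I ⊆ [1,∞)`. -/
def SatisfiesModelODE (α w : ℝ) (lam : ℂ) (v r : ℝ → ℂ) (I : Set ℝ) : Prop :=
  ContinuousOn r I ∧
  ∀ t ∈ I, HasDerivWithinAt v
    (Complex.I * ((w : ℂ) * v t
      + lam * ((t ^ (-α / 2) : ℝ) : ℂ) * ((‖v t‖ ^ α : ℝ) : ℂ) * v t
      + ((t ^ (-α / 2) : ℝ) : ℂ) * r t)) I t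

/-- `Φ(t) = ∫₁ᵗ s^{−α/2} |v(s)|^α ds`. -/
def Phi (α : ℝ) (v : ℝ → ℂ) (t : ℝ) : ℝ :=
  ∫ s in (1:ℝ)..t, s ^ (-α / 2) * ‖v s‖ ^ α

/-- `z(t) = v(t) e^{−i(w t + λ Φ(t))}`. -/
def zfun (α w : ℝ) (lam : ℂ) (v : ℝ → ℂ) (t : ℝ) : ℂ :=
  v t * Complex.exp (-(Complex.I) * ((w : ℂ) * (t : ℂ) + lam * (Phi α v t : ℝ)))

open MeasureTheory Filter Topology

theorem exists_norm_sub_le_rpow_of_norm_deriv_le {E : Type*} [NormedAddCommGroup E]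
    [NormedSpace ℝ E] [CompleteSpace E] {f f' : ℝ → E} {a B p : ℝ} (ha : 0 < a) (hp : p < -1)
    (hcont : ContinuousWithinAt f (Ici a) a) (hderiv : ∀ t ∈ Ioi a, HasDerivAt f (f' t) t)
    (hbound : ∀ t ∈ Ioi a, ‖f' t‖ ≤ B * t ^ p) :
    ∃ L : E, ∀ t, a ≤ t → ‖f t - L‖ ≤ B / (-(p + 1)) * t ^ (p + 1) := by
  have hmeas : AEStronglyMeasurable f' (volume.restrict (Ioi a)) :=
    (aestronglyMeasurable_deriv f _).congr <|
      (ae_restrict_mem measurableSet_Ioi).mono fun t ht => (hderiv t ht).deriv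
  have hint : IntegrableOn f' (Ioi a) :=
    ((integrableOn_Ioi_rpow_of_lt hp ha).const_mul B).mono' hmeas <|
      (ae_restrict_mem measurableSet_Ioi).mono hbound
  refine ⟨limUnder atTop f, fun t ht => ?_⟩
  have ht0 : 0 < t := ha.trans_le ht
  have hcont_t : ContinuousWithinAt f (Ici t) t := by
    rcases ht.eq_or_lt with rfl | ht'
    · exact hcont
    · exact (hderiv t ht').continuousAt.continuousWithinAt
  have htail : ∫ s in Ioi t, f' s = limUnder atTop f - f t :=
    integral_Ioi_of_hasDerivAt_of_tendsto hcont_t (fun s hs => hderiv s (ht.trans_lt hs))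
      (hint.mono_set (Ioi_subset_Ioi ht))
      (tendsto_limUnder_of_hasDerivAt_of_integrableOn_Ioi hderiv hint)
  calc ‖f t - limUnder atTop f‖ = ‖∫ s in Ioi t, f' s‖ := by rw [htail, norm_sub_rev]
    _ ≤ ∫ s in Ioi t, B * s ^ p :=
        norm_integral_le_of_norm_le ((integrableOn_Ioi_rpow_of_lt hp ht0).const_mul B) <|
          (ae_restrict_mem measurableSet_Ioi).mono fun s hs => hbound s (ht.trans_lt hs)
    _ = B / (-(p + 1)) * t ^ (p + 1) := by
        rw [integral_const_mul, integral_Ioi_rpow_of_lt hp ht0, div_neg]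
        ring

theorem exists_integral_le_add_mul_log {g : ℝ → ℝ} {K T : ℝ} (hT : 1 ≤ T) (hK : 0 ≤ K)
    (hg : ContinuousOn g (Ici 1)) (hgK : ∀ s, T ≤ s → g s ≤ K * s⁻¹) :
    ∃ A, ∀ t, 1 ≤ t → ∫ s in (1 : ℝ)..t, g s ≤ A + K * Real.log t := by
  have hint : ∀ b, 1 ≤ b → IntervalIntegrable g volume 1 b := fun b hb =>
    (hg.mono fun x hx => (le_min le_rfl hb).trans hx.1).intervalIntegrable
  refine ⟨∫ s in (1 : ℝ)..T, |g s|, fun t ht => ?_⟩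
  have hKlog : 0 ≤ K * Real.log t := mul_nonneg hK (Real.log_nonneg ht)
  have habs : ∀ b, 1 ≤ b → ∫ s in (1 : ℝ)..b, g s ≤ ∫ s in (1 : ℝ)..b, |g s| := fun b hb =>
    intervalIntegral.integral_mono_on hb (hint b hb) (hint b hb).abs
      fun s _ => le_abs_self _
  rcases le_or_gt t T with htT | hTt
  · calc ∫ s in (1 : ℝ)..t, g s ≤ ∫ s in (1 : ℝ)..t, |g s| := habs t ht
      _ ≤ ∫ s in (1 : ℝ)..T, |g s| :=
          intervalIntegral.integral_mono_interval le_rfl ht htT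
            (Eventually.of_forall fun s => abs_nonneg (g s)) (hint T hT).abs
      _ ≤ _ := le_add_of_nonneg_right hKlog
  · have hT0 : 0 < T := one_pos.trans_le hT
    have ht0 : 0 < t := hT0.trans hTt
    have hintTt : IntervalIntegrable g volume T t := (hint T hT).symm.trans (hint t ht)
    have hinv : IntervalIntegrable (fun s => K * s⁻¹) volume T t :=
      (intervalIntegrable_inv_iff.2 (Or.inr (notMem_uIcc_of_lt hT0 ht0))).const_mul K
    have htail : ∫ s in T..t, g s ≤ K * Real.log t :=
      calc ∫ s in T..t, g s ≤ ∫ s in T..t, K * s⁻¹ :=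
            intervalIntegral.integral_mono_on hTt.le hintTt hinv fun s hs => hgK s hs.1
        _ = K * Real.log (t / T) := by
            rw [intervalIntegral.integral_const_mul, integral_inv_of_pos hT0 ht0]
        _ ≤ K * Real.log t := by
            gcongr
            exact div_le_self ht0.le hT
    rw [← intervalIntegral.integral_add_adjacent_intervals (hint T hT) hintTt]
    linarith [habs T hT]

theorem rpow_neg_half_mul_rpow_le_mul_inv {α s x K : ℝ} (hα : 0 < α) (hs : 0 < s) (hK : 0 ≤ K)
    (hx : 0 ≤ x) (hxK : x ≤ K * s ^ (1 / 2 - 1 / α)) :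
    s ^ (-α / 2) * x ^ α ≤ K ^ α * s⁻¹ :=
  calc s ^ (-α / 2) * x ^ α ≤ s ^ (-α / 2) * (K * s ^ (1 / 2 - 1 / α)) ^ α := by gcongr
    _ = K ^ α * s⁻¹ := by
        rw [mul_rpow hK (rpow_nonneg hs.le _), ← rpow_mul hs.le, mul_left_comm, ← rpow_add hs,
          show -α / 2 + (1 / 2 - 1 / α) * α = -1 by field_simp; ring, rpow_neg_one]

theorem SatisfiesModelODE.continuousOn {α w : ℝ} {lam : ℂ} {v r : ℝ → ℂ} {I : Set ℝ}
    (h : SatisfiesModelODE α w lam v r I) : ContinuousOn v I :=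
  fun t ht => (h.2 t ht).continuousWithinAt

section ModelODE

variable {α w : ℝ} {lam : ℂ} {v : ℝ → ℂ}

theorem continuousOn_rpow_mul_norm_rpow (hα : 0 ≤ α) (hv : ContinuousOn v (Ici 1)) :
    ContinuousOn (fun s : ℝ => s ^ (-α / 2) * ‖v s‖ ^ α) (Ici 1) :=
  (continuousOn_id.rpow_const fun _ hs => Or.inl (one_pos.trans_le hs).ne').mul
    (hv.norm.rpow_const fun _ _ => Or.inr hα)

theorem hasDerivWithinAt_Phi (hα : 0 ≤ α) (hv : ContinuousOn v (Ici 1)) {t : ℝ} (ht : 1 ≤ t) :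
    HasDerivWithinAt (Phi α v) (t ^ (-α / 2) * ‖v t‖ ^ α) (Ici 1) t := by
  have hg := continuousOn_rpow_mul_norm_rpow hα hv
  have hint : IntervalIntegrable (fun s : ℝ => s ^ (-α / 2) * ‖v s‖ ^ α) volume 1 t :=
    (hg.mono fun x hx => (le_min le_rfl ht).trans hx.1).intervalIntegrable
  rcases ht.eq_or_lt with rfl | ht
  · exact intervalIntegral.integral_hasDerivWithinAt_right hint (t := Ioi 1)
      ((hg.mono Ioi_subset_Ici_self).stronglyMeasurableAtFilter_nhdsWithin measurableSet_Ioi 1)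
      ((hg 1 self_mem_Ici).mono Ioi_subset_Ici_self)
  · exact (intervalIntegral.integral_hasDerivAt_right hint
      ((hg.mono Ioi_subset_Ici_self).stronglyMeasurableAtFilter isOpen_Ioi t ht)
      ((hg t ht.le).continuousAt (Ici_mem_nhds ht))).hasDerivWithinAt

def gaugeFactor (α w : ℝ) (lam : ℂ) (v : ℝ → ℂ) (t : ℝ) : ℂ :=
  Complex.exp (-(Complex.I) * ((w : ℂ) * (t : ℂ) + lam * (Phi α v t : ℝ)))

theorem norm_gaugeFactor (t : ℝ) :
    ‖gaugeFactor α w lam v t‖ = Real.exp (lam.im * Phi α v t) := by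
  simp only [gaugeFactor, Complex.norm_exp]
  congr 1
  simp [Complex.mul_re, Complex.mul_im]

theorem hasDerivWithinAt_gaugeFactor (hα : 0 ≤ α) (hv : ContinuousOn v (Ici 1)) {t : ℝ}
    (ht : 1 ≤ t) :
    HasDerivWithinAt (gaugeFactor α w lam v)
      (gaugeFactor α w lam v t *
        (-(Complex.I) * (w + lam * ((t ^ (-α / 2) * ‖v t‖ ^ α : ℝ) : ℂ)))) (Ici 1) t := by
  have hid : HasDerivWithinAt (fun s : ℝ => (s : ℂ)) 1 (Ici 1) t := by
    simpa using (hasDerivWithinAt_id t (Ici 1)).ofReal_comp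
  have hphase := ((hid.const_mul (w : ℂ)).add
    ((hasDerivWithinAt_Phi hα hv ht).ofReal_comp.const_mul lam)).const_mul (-(Complex.I))
  rw [mul_one] at hphase
  exact hphase.cexp

theorem hasDerivWithinAt_zfun {r : ℝ → ℂ} (hα : 0 ≤ α)
    (hode : SatisfiesModelODE α w lam v r (Ici 1)) {t : ℝ} (ht : 1 ≤ t) :
    HasDerivWithinAt (zfun α w lam v)
      (Complex.I * ((t ^ (-α / 2) : ℝ) : ℂ) * r t * gaugeFactor α w lam v t) (Ici 1) t := by
  refine ((hode.2 t ht).mul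
    (hasDerivWithinAt_gaugeFactor (w := w) (lam := lam) hα hode.continuousOn ht)).congr_deriv ?_
  push_cast
  ring

theorem norm_deriv_zfun_le {r : ℝ → ℂ} {t C A K : ℝ} (hlam : 0 ≤ lam.im) (ht : 1 ≤ t)
    (hr : ‖r t‖ ≤ C * t ^ (-(5 : ℝ) / 4 + α / 2)) (hΦ : Phi α v t ≤ A + K * Real.log t) :
    ‖Complex.I * ((t ^ (-α / 2) : ℝ) : ℂ) * r t * gaugeFactor α w lam v t‖ ≤
      C * Real.exp (lam.im * A) * t ^ (-(5 : ℝ) / 4 + lam.im * K) := by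
  have ht0 : 0 < t := one_pos.trans_le ht
  have hexp : Real.exp (lam.im * Phi α v t) ≤ Real.exp (lam.im * A) * t ^ (lam.im * K) := by
    rw [rpow_def_of_pos ht0, ← Real.exp_add]
    gcongr
    linarith [mul_le_mul_of_nonneg_left hΦ hlam]
  have hCt : 0 ≤ C * t ^ (-(5 : ℝ) / 4 + α / 2) := (norm_nonneg _).trans hr
  rw [norm_mul, norm_mul, norm_mul, Complex.norm_I, one_mul, Complex.norm_real,
    Real.norm_of_nonneg (rpow_nonneg ht0.le _), norm_gaugeFactor]
  calc t ^ (-α / 2) * ‖r t‖ * Real.exp (lam.im * Phi α v t)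
      ≤ t ^ (-α / 2) * (C * t ^ (-(5 : ℝ) / 4 + α / 2)) *
          (Real.exp (lam.im * A) * t ^ (lam.im * K)) := by gcongr
    _ = C * Real.exp (lam.im * A) *
          (t ^ (-α / 2) * t ^ (-(5 : ℝ) / 4 + α / 2) * t ^ (lam.im * K)) := by ring
    _ = C * Real.exp (lam.im * A) * t ^ (-(5 : ℝ) / 4 + lam.im * K) := by
        rw [← rpow_add ht0, ← rpow_add ht0]
        congr 2
        ring

end ModelODE

theorem modified_limit_exists_general (α w : ℝ) (hα1 : 0 < α)
    (lam : ℂ) (hlam : 0 < lam.im)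
    (C Tstar K₀ : ℝ) (hC : 0 < C) (hT : 1 ≤ Tstar) (hK₀ : 0 < K₀)
    (hKcond : lam.im * K₀ ^ α < 1 / 4)
    (v r : ℝ → ℂ)
    (hode : SatisfiesModelODE α w lam v r (Ici 1))
    (hr : ∀ t : ℝ, 1 ≤ t → ‖r t‖ ≤ C * t ^ (-(5:ℝ)/4 + α/2))
    (hv : ∀ t : ℝ, Tstar ≤ t → ‖v t‖ ≤ K₀ * t ^ ((1:ℝ)/2 - 1/α)) :
    ∃ zplus : ℂ, ∃ C' : ℝ, 0 < C' ∧ ∀ t : ℝ, 1 ≤ t →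
      ‖zfun α w lam v t - zplus‖ ≤ C' * t ^ (-(1:ℝ)/4 + lam.im * K₀ ^ α) := by
  obtain ⟨A, hΦ⟩ : ∃ A, ∀ t, 1 ≤ t → Phi α v t ≤ A + K₀ ^ α * Real.log t :=
    exists_integral_le_add_mul_log hT (rpow_nonneg hK₀.le α)
      (continuousOn_rpow_mul_norm_rpow hα1.le hode.continuousOn) fun s hs =>
        rpow_neg_half_mul_rpow_le_mul_inv hα1 (one_pos.trans_le (hT.trans hs)) hK₀.le
          (norm_nonneg _) (hv s hs)
  obtain ⟨zplus, hz⟩ := exists_norm_sub_le_rpow_of_norm_deriv_le (f := zfun α w lam v)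
    (p := -(5 : ℝ) / 4 + lam.im * K₀ ^ α) one_pos (by linarith)
    (hasDerivWithinAt_zfun hα1.le hode le_rfl).continuousWithinAt
    (fun t ht => (hasDerivWithinAt_zfun hα1.le hode ht.out.le).hasDerivAt (Ici_mem_nhds ht))
    (fun t ht => norm_deriv_zfun_le hlam.le ht.out.le (hr t ht.out.le) (hΦ t ht.out.le))
  refine ⟨zplus, C * Real.exp (lam.im * A) / (1 / 4 - lam.im * K₀ ^ α),
    div_pos (mul_pos hC (Real.exp_pos _)) (by linarith), fun t ht => ?_⟩
  convert hz t ht using 3 <;> ring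

/-- For `0 < α < 2`, `λ₂ > 0`, `λ₂ K₀^α < 1/4`, solutions of the model
ODE with `|r(t)| ≤ C t^{−5/4+α/2}` and `|v(t)| ≤ K₀ t^{1/2−1/α}` for `t ≥ T*` have a
modified limit: there exist `z₊ ∈ ℂ` and `C′ > 0` with
`|z(t) − z₊| ≤ C′ t^{−1/4 + λ₂ K₀^α}` for all `t ≥ 1`. -/
theorem modified_limit_exists (α w : ℝ) (hα1 : 0 < α) (hα2 : α < 2)
    (lam : ℂ) (hlam : 0 < lam.im)
    (C Tstar K₀ : ℝ) (hC : 0 < C) (hT : 1 ≤ Tstar) (hK₀ : 0 < K₀)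
    (hKcond : lam.im * K₀ ^ α < 1 / 4)
    (v r : ℝ → ℂ)
    (hode : SatisfiesModelODE α w lam v r (Ici 1))
    (hr : ∀ t : ℝ, 1 ≤ t → ‖r t‖ ≤ C * t ^ (-(5:ℝ)/4 + α/2))
    (hv : ∀ t : ℝ, Tstar ≤ t → ‖v t‖ ≤ K₀ * t ^ ((1:ℝ)/2 - 1/α)) :
    ∃ zplus : ℂ, ∃ C' : ℝ, 0 < C' ∧ ∀ t : ℝ, 1 ≤ t →
      ‖zfun α w lam v t - zplus‖ ≤ C' * t ^ (-(1:ℝ)/4 + lam.im * K₀ ^ α) :=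
  modified_limit_exists_general α w hα1 lam hlam C Tstar K₀ hC hT hK₀ hKcond v r hode hr hv

end
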